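/- Let T > 0, l > 0, a ≠ 0, b, c ∈ ℝ. Then classical solutions on [0, T] of the initial boundary value problem v_t(x,t) = a² v_xx(x,t) + b v_x(x,t) + c v(x,t) + g(x,t) for x ∈ (0,l), t ∈ (0,T), with Dirichlet boundary conditions v(0,t) = θ₁(t), v(l,t) = θ₂(t) and initial condition v(x,0) = ψ(x), are unique: if v₁ and v₂ are both classical solutions, then v₁ ≡ v₂ on [0,l] × [0,T]. -/

import Mathlib

/-!
The weighted difference `u = e^{-ct} (v₁ - v₂)` of two solutions satisfies
`u_t = a² u_xx + b u_x` and vanishes on the parabolic boundary. By the weak maximum principle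
`u ≤ 0`: for `ε > 0` and `T' < T`, a positive maximum of `u - εt` on `[0,l] × [0,T']` would lie
off the parabolic boundary, where `u_x = 0`, `u_xx ≤ 0` and `u_t ≥ ε` contradict the equation;
then let `ε → 0` and `T' → T`. Exchanging `v₁` and `v₂` gives equality.
-/

open Set Filter Topology intervalIntegral Real

noncomputable section

/-- A classical solution on `[0, T]` of the initial boundary value problem
`v_t = a² v_xx + b v_x + c v + g` on `(0, l) × (0, T)` with Dirichlet boundary
conditions `v(0,t) = θ₁(t)`, `v(l,t) = θ₂(t)` and initial condition `v(x,0) = ψ(x)`: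
`v, v_t, v_xx ∈ C⁰([0,l] × [0,T])` and the equation and side conditions hold pointwise. -/
def IsClassicalSolution (a b c l T : ℝ) (g : ℝ → ℝ → ℝ) (θ₁ θ₂ ψ : ℝ → ℝ)
    (v : ℝ → ℝ → ℝ) : Prop :=
  ContinuousOn (fun p : ℝ × ℝ => v p.1 p.2) (Set.Icc 0 l ×ˢ Set.Icc 0 T) ∧
  ContinuousOn (fun p : ℝ × ℝ => deriv (fun s => v p.1 s) p.2) (Set.Icc 0 l ×ˢ Set.Icc 0 T) ∧
  ContinuousOn (fun p : ℝ × ℝ => deriv (fun y => deriv (fun z => v z p.2) y) p.1)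
    (Set.Icc 0 l ×ˢ Set.Icc 0 T) ∧
  (∀ x ∈ Set.Ioo 0 l, ∀ t ∈ Set.Ioo 0 T,
    DifferentiableAt ℝ (fun s => v x s) t ∧
    DifferentiableAt ℝ (fun y => v y t) x ∧
    DifferentiableAt ℝ (fun y => deriv (fun z => v z t) y) x) ∧
  (∀ x ∈ Set.Ioo 0 l, ∀ t ∈ Set.Ioo 0 T,
    deriv (fun s => v x s) t =
      a ^ 2 * deriv (fun y => deriv (fun z => v z t) y) x
        + b * deriv (fun y => v y t) x + c * v x t + g x t) ∧
  (∀ t ∈ Set.Ioo 0 T, v 0 t = θ₁ t ∧ v l t = θ₂ t) ∧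
  (∀ x ∈ Set.Ioo 0 l, v x 0 = ψ x)

theorem HasDerivAt.nonneg_of_isMaxOn_Icc {f : ℝ → ℝ} {f' a m : ℝ} (hf : HasDerivAt f f' m)
    (ham : a < m) (hmax : IsMaxOn f (Icc a m) m) : 0 ≤ f' := by
  have hcone : a - m ∈ posTangentConeAt (Icc a m) m :=
    mem_posTangentConeAt_of_segment_subset <| by
      rw [add_sub_cancel, segment_eq_Icc', min_eq_right ham.le, max_eq_left ham.le]
  have h := hmax.localize.hasFDerivWithinAt_nonpos hf.hasFDerivAt.hasFDerivWithinAt hcone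
  rw [ContinuousLinearMap.toSpanSingleton_apply, smul_eq_mul] at h
  nlinarith

/-- If `deriv (deriv f) x₀ > 0`, the second-derivative test makes `x₀` also a local minimum, so `f`
is locally constant near `x₀` and `deriv (deriv f) x₀ = 0`. -/
theorem IsLocalMax.deriv_deriv_nonpos {f : ℝ → ℝ} {x₀ : ℝ} (h : IsLocalMax f x₀)
    (hc : ContinuousAt f x₀) : deriv (deriv f) x₀ ≤ 0 := by
  by_contra! hpos
  have hmin := isLocalMin_of_deriv_deriv_pos hpos h.deriv_eq_zero hc
  have hconst : f =ᶠ[𝓝 x₀] fun _ => f x₀ := (h.and hmin).mono fun _ hy => le_antisymm hy.1 hy.2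
  have hzero : deriv (deriv f) x₀ = 0 := by simp [hconst.deriv.deriv_eq]
  exact hpos.ne' hzero

theorem IsLocalMax.nonpos_of_hasDerivAt_of_hasDerivAt {f f' : ℝ → ℝ} {f'' x₀ : ℝ}
    (h : IsLocalMax f x₀) (hf : ∀ᶠ y in 𝓝 x₀, HasDerivAt f (f' y) y)
    (hf' : HasDerivAt f' f'' x₀) : f'' ≤ 0 := by
  have hd : deriv f =ᶠ[𝓝 x₀] f' := hf.mono fun _ hy => hy.deriv
  rw [← hf'.deriv, ← hd.deriv_eq]
  exact h.deriv_deriv_nonpos hf.self_of_nhds.continuousAt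

def IsHeatSubsolutionAt (k b : ℝ) (u ut ux uxx : ℝ → ℝ → ℝ) (x t : ℝ) : Prop :=
  HasDerivAt (u x ·) (ut x t) t ∧ HasDerivAt (u · t) (ux x t) x ∧
    HasDerivAt (ux · t) (uxx x t) x ∧ ut x t ≤ k * uxx x t + b * ux x t

section MaximumPrinciple

variable {k b l T : ℝ} {u ut ux uxx : ℝ → ℝ → ℝ}

theorem IsHeatSubsolutionAt.not_isLocalMax {x₀ t₀ t' ε : ℝ} (hk : 0 ≤ k)
    (h : IsHeatSubsolutionAt k b u ut ux uxx x₀ t₀)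
    (hux : ∀ᶠ y in 𝓝 x₀, HasDerivAt (u · t₀) (ux y t₀) y) (hε : 0 < ε) (ht' : t' < t₀)
    (hmax : IsMaxOn (fun s => u x₀ s - ε * s) (Icc t' t₀) t₀) :
    ¬IsLocalMax (u · t₀) x₀ := by
  intro hmaxx
  obtain ⟨hut, -, huxx, hsub⟩ := h
  have htime : 0 ≤ ut x₀ t₀ - ε * 1 :=
    (hut.sub ((hasDerivAt_id' t₀).const_mul ε)).nonneg_of_isMaxOn_Icc ht' hmax
  have hx : ux x₀ t₀ = 0 := hmaxx.hasDerivAt_eq_zero hux.self_of_nhds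
  have hxx : uxx x₀ t₀ ≤ 0 := hmaxx.nonpos_of_hasDerivAt_of_hasDerivAt hux huxx
  rw [hx, mul_zero, add_zero] at hsub
  linarith [mul_nonpos_of_nonneg_of_nonpos hk hxx]

theorem le_mul_of_isHeatSubsolutionAt {ε : ℝ} (hk : 0 ≤ k) (hε : 0 < ε)
    (hu : ContinuousOn (Function.uncurry u) (Icc 0 l ×ˢ Icc 0 T))
    (hsub : ∀ x ∈ Ioo 0 l, ∀ t ∈ Ioc 0 T, IsHeatSubsolutionAt k b u ut ux uxx x t)
    (h₀ : ∀ t ∈ Icc 0 T, u 0 t ≤ 0) (hl : ∀ t ∈ Icc 0 T, u l t ≤ 0)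
    (hinit : ∀ x ∈ Icc 0 l, u x 0 ≤ 0) :
    ∀ x ∈ Icc 0 l, ∀ t ∈ Icc 0 T, u x t ≤ ε * t := by
  intro x hx t ht
  have hφ : ContinuousOn (fun p : ℝ × ℝ => u p.1 p.2 - ε * p.2) (Icc 0 l ×ˢ Icc 0 T) :=
    hu.sub (by fun_prop)
  obtain ⟨⟨x₀, t₀⟩, ⟨hx₀ : x₀ ∈ Icc 0 l, ht₀ : t₀ ∈ Icc 0 T⟩, hmax⟩ :=
    (isCompact_Icc.prod isCompact_Icc).exists_isMaxOn ⟨(x, t), mk_mem_prod hx ht⟩ hφ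
  suffices hmax₀ : u x₀ t₀ ≤ ε * t₀ by
    have := hmax (mk_mem_prod hx ht)
    simp only [mem_ofPred_eq] at this
    linarith
  by_contra! hpos
  have hpos₀ : 0 < u x₀ t₀ := by nlinarith [ht₀.1]
  have hx₀' : x₀ ∈ Ioo 0 l :=
    ⟨hx₀.1.lt_of_ne (by rintro rfl; linarith [h₀ t₀ ht₀]),
      hx₀.2.lt_of_ne (by rintro rfl; linarith [hl t₀ ht₀])⟩
  have ht₀' : t₀ ∈ Ioc 0 T := ⟨ht₀.1.lt_of_ne (by rintro rfl; linarith [hinit x₀ hx₀]), ht₀.2⟩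
  refine (hsub x₀ hx₀' t₀ ht₀').not_isLocalMax hk ?_ hε ht₀'.1 ?_ ?_
  · filter_upwards [Ioo_mem_nhds hx₀'.1 hx₀'.2] with y hy using (hsub y hy t₀ ht₀').2.1
  · exact fun s hs => hmax (mk_mem_prod hx₀ ⟨hs.1, hs.2.trans ht₀.2⟩)
  · filter_upwards [Icc_mem_nhds hx₀'.1 hx₀'.2] with y hy
    have := hmax (mk_mem_prod hy ht₀)
    simp only [mem_ofPred_eq] at this
    linarith

theorem nonpos_of_isHeatSubsolutionAt (hk : 0 ≤ k)
    (hu : ContinuousOn (Function.uncurry u) (Icc 0 l ×ˢ Icc 0 T))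
    (hsub : ∀ x ∈ Ioo 0 l, ∀ t ∈ Ioo 0 T, IsHeatSubsolutionAt k b u ut ux uxx x t)
    (h₀ : ∀ t ∈ Icc 0 T, u 0 t ≤ 0) (hl : ∀ t ∈ Icc 0 T, u l t ≤ 0)
    (hinit : ∀ x ∈ Icc 0 l, u x 0 ≤ 0) :
    ∀ x ∈ Icc 0 l, ∀ t ∈ Icc 0 T, u x t ≤ 0 := by
  have hbefore : ∀ x ∈ Icc 0 l, ∀ t ∈ Ico 0 T, u x t ≤ 0 := by
    intro x hx t ht
    obtain ⟨T', htT', hT'⟩ := exists_between ht.2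
    have hle : ∀ ε > 0, u x t ≤ ε * t := fun ε hε =>
      le_mul_of_isHeatSubsolutionAt (T := T') hk hε
        (hu.mono (prod_mono_right (Icc_subset_Icc_right hT'.le)))
        (fun y hy s hs => hsub y hy s ⟨hs.1, hs.2.trans_lt hT'⟩)
        (fun s hs => h₀ s ⟨hs.1, hs.2.trans hT'.le⟩) (fun s hs => hl s ⟨hs.1, hs.2.trans hT'.le⟩)
        hinit x hx t ⟨ht.1, htT'.le⟩
    have hlim : Tendsto (fun ε => ε * t) (𝓝[>] 0) (𝓝 (0 * t)) :=
      ((continuous_mul_const t).tendsto 0).mono_left nhdsWithin_le_nhds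
    rw [zero_mul] at hlim
    exact ge_of_tendsto hlim (eventually_nhdsWithin_of_forall hle)
  intro x hx t ht
  rcases ht.2.lt_or_eq with htT | rfl
  · exact hbefore x hx t ⟨ht.1, htT⟩
  rcases ht.1.eq_or_lt with rfl | hpos
  · exact hinit x hx
  exact ContinuousWithinAt.closure_le (by rw [closure_Ico hpos.ne]; exact right_mem_Icc.2 hpos.le)
    ((hu.uncurry_left x hx _ ht).mono Ico_subset_Icc_self) continuousWithinAt_const
    (hbefore x hx)

end MaximumPrinciple

theorem isHeatSubsolutionAt_exp_mul {k b c x t : ℝ} {w wt wx wxx : ℝ → ℝ → ℝ}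
    (hwt : HasDerivAt (w x ·) (wt x t) t) (hwx : HasDerivAt (w · t) (wx x t) x)
    (hwxx : HasDerivAt (wx · t) (wxx x t) x)
    (hw : wt x t ≤ k * wxx x t + b * wx x t + c * w x t) :
    IsHeatSubsolutionAt k b (fun x t => exp (-(c * t)) * w x t)
      (fun x t => exp (-(c * t)) * (wt x t - c * w x t))
      (fun x t => exp (-(c * t)) * wx x t) (fun x t => exp (-(c * t)) * wxx x t) x t := by
  refine ⟨?_, hwx.const_mul _, hwxx.const_mul _, ?_⟩
  · have hE : HasDerivAt (fun s => exp (-(c * s))) (exp (-(c * t)) * -c) t :=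
      by simpa [mul_comm] using ((hasDerivAt_id' t).const_mul c).neg.exp
    exact (hE.mul hwt).congr_deriv (by ring)
  · calc exp (-(c * t)) * (wt x t - c * w x t)
        ≤ exp (-(c * t)) * (k * wxx x t + b * wx x t) :=
          mul_le_mul_of_nonneg_left (by linarith) (exp_pos _).le
      _ = k * (exp (-(c * t)) * wxx x t) + b * (exp (-(c * t)) * wx x t) := by ring

namespace IsClassicalSolution

variable {a b c l T : ℝ} {g : ℝ → ℝ → ℝ} {θ₁ θ₂ ψ : ℝ → ℝ} {v₁ v₂ : ℝ → ℝ → ℝ}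

theorem eq_on_parabolic_boundary (h₁ : IsClassicalSolution a b c l T g θ₁ θ₂ ψ v₁)
    (h₂ : IsClassicalSolution a b c l T g θ₁ θ₂ ψ v₂) (hl : 0 < l) (hT : 0 < T) :
    (∀ t ∈ Icc 0 T, v₁ 0 t = v₂ 0 t) ∧ (∀ t ∈ Icc 0 T, v₁ l t = v₂ l t) ∧
      ∀ x ∈ Icc 0 l, v₁ x 0 = v₂ x 0 := by
  obtain ⟨hc₁, -, -, -, -, hbd₁, hin₁⟩ := h₁
  obtain ⟨hc₂, -, -, -, -, hbd₂, hin₂⟩ := h₂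
  refine ⟨fun t ht => ?_, fun t ht => ?_, fun x hx => ?_⟩
  · refine EqOn.of_subset_closure (fun s hs => ?_) (hc₁.uncurry_left (f := v₁) 0 (left_mem_Icc.2 hl.le))
      (hc₂.uncurry_left (f := v₂) 0 (left_mem_Icc.2 hl.le)) Ioo_subset_Icc_self (closure_Ioo hT.ne).ge ht
    rw [(hbd₁ s hs).1, (hbd₂ s hs).1]
  · refine EqOn.of_subset_closure (fun s hs => ?_) (hc₁.uncurry_left (f := v₁) l (right_mem_Icc.2 hl.le))
      (hc₂.uncurry_left (f := v₂) l (right_mem_Icc.2 hl.le)) Ioo_subset_Icc_self (closure_Ioo hT.ne).ge ht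
    rw [(hbd₁ s hs).2, (hbd₂ s hs).2]
  · refine EqOn.of_subset_closure (fun y hy => ?_)
      (hc₁.uncurry_right (f := v₁) 0 (left_mem_Icc.2 hT.le)) (hc₂.uncurry_right (f := v₂) 0 (left_mem_Icc.2 hT.le))
      Ioo_subset_Icc_self (closure_Ioo hl.ne).ge hx
    rw [hin₁ y hy, hin₂ y hy]

theorem le (h₁ : IsClassicalSolution a b c l T g θ₁ θ₂ ψ v₁)
    (h₂ : IsClassicalSolution a b c l T g θ₁ θ₂ ψ v₂) (hl : 0 < l) (hT : 0 < T) :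
    ∀ x ∈ Icc 0 l, ∀ t ∈ Icc 0 T, v₁ x t ≤ v₂ x t := by
  obtain ⟨h₀, hl', hinit⟩ := h₁.eq_on_parabolic_boundary h₂ hl hT
  obtain ⟨hc₁, -, -, hd₁, hpde₁, -⟩ := h₁
  obtain ⟨hc₂, -, -, hd₂, hpde₂, -⟩ := h₂
  have hu : ContinuousOn (fun p : ℝ × ℝ => exp (-(c * p.2)) * (v₁ p.1 p.2 - v₂ p.1 p.2))
      (Icc 0 l ×ˢ Icc 0 T) :=
    (continuous_snd.const_mul c).neg.rexp.continuousOn.mul (hc₁.sub hc₂)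
  have hneg := nonpos_of_isHeatSubsolutionAt (b := b)
    (u := fun x t => exp (-(c * t)) * (v₁ x t - v₂ x t)) (sq_nonneg a) hu (fun x hx t ht => by
      obtain ⟨ht₁, hx₁, hxx₁⟩ := hd₁ x hx t ht
      obtain ⟨ht₂, hx₂, hxx₂⟩ := hd₂ x hx t ht
      exact isHeatSubsolutionAt_exp_mul (w := fun x t => v₁ x t - v₂ x t)
        (wx := fun x t => deriv (v₁ · t) x - deriv (v₂ · t) x)
        (ht₁.hasDerivAt.sub ht₂.hasDerivAt) (hx₁.hasDerivAt.sub hx₂.hasDerivAt)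
        (hxx₁.hasDerivAt.sub hxx₂.hasDerivAt)
        (le_of_eq <| by linear_combination hpde₁ x hx t ht - hpde₂ x hx t ht))
    (fun t ht => by simp [h₀ t ht]) (fun t ht => by simp [hl' t ht]) (fun x hx => by simp [hinit x hx])
  intro x hx t ht
  have := hneg x hx t ht
  exact sub_nonpos.1 (nonpos_of_mul_nonpos_right this (exp_pos _))

end IsClassicalSolution

theorem uniqueness_of_classical_solutions_general
    (a b c l T : ℝ) (hl : 0 < l) (hT : 0 < T)
    (g : ℝ → ℝ → ℝ) (θ₁ θ₂ ψ : ℝ → ℝ) (v₁ v₂ : ℝ → ℝ → ℝ)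
    (h₁ : IsClassicalSolution a b c l T g θ₁ θ₂ ψ v₁)
    (h₂ : IsClassicalSolution a b c l T g θ₁ θ₂ ψ v₂) :
    ∀ x ∈ Set.Icc 0 l, ∀ t ∈ Set.Icc 0 T, v₁ x t = v₂ x t :=
  fun x hx t ht => le_antisymm (h₁.le h₂ hl hT x hx t ht) (h₂.le h₁ hl hT x hx t ht)

/-- Classical solutions of the linear 1D heat equation without delay are unique. -/
theorem uniqueness_of_classical_solutions
    (a b c l T : ℝ) (ha : a ≠ 0) (hl : 0 < l) (hT : 0 < T)
    (g : ℝ → ℝ → ℝ) (θ₁ θ₂ ψ : ℝ → ℝ) (v₁ v₂ : ℝ → ℝ → ℝ)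
    (h₁ : IsClassicalSolution a b c l T g θ₁ θ₂ ψ v₁)
    (h₂ : IsClassicalSolution a b c l T g θ₁ θ₂ ψ v₂) :
    ∀ x ∈ Set.Icc 0 l, ∀ t ∈ Set.Icc 0 T, v₁ x t = v₂ x t :=
  uniqueness_of_classical_solutions_general a b c l T hl hT g θ₁ θ₂ ψ v₁ v₂ h₁ h₂

end
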